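/- arXiv:2108.03706 — 3 statements merged into one kernel-verified Lean document; each statement's English description precedes it below -/
import Mathlib

section
/- Let V^π be the value function of a policy π with discount factor γ ∈ (0,1), let Π denote the projection (in the weighted norm ‖v‖_D = √(vᵀ D v), D the diagonal stationary-distribution matrix) onto the span of the feature matrix Φ, and let θ_* be the fixed point of the projected Bellman equation V_θ = Π T^π V_θ with V_θ = Φ θ. Then ‖V_{θ_*} − V^π‖_D ≤ (1/√(1−γ²)) ‖Π V^π − V^π‖_D. -/
open Finset

/-- Tsitsiklis–Van Roy approximation-error bound for the TD fixed point: if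
`V^π` is the value function (fixed point of the Bellman operator `T^π V = r^π + γ P^π V`),
`Proj` is the `D`-orthogonal projection onto the span of the feature matrix `Φ` (where
`D = diag(μ)` for the stationary distribution `μ`), and `θ_*` is the fixed point of the
projected Bellman equation `Φθ = Proj(T^π(Φθ))`, then
`‖Φθ_* − V^π‖_D ≤ (1/√(1−γ²)) ‖Proj V^π − V^π‖_D`. -/
theorem stmt_14 {S : Type*} [Fintype S] [Nonempty S] {d : ℕ}
    (P : Matrix S S ℝ) (μ : S → ℝ) (γ : ℝ) (hγ0 : 0 < γ) (hγ1 : γ < 1)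
    (hPnonneg : ∀ s s', 0 ≤ P s s') (hProw : ∀ s, ∑ s' : S, P s s' = 1)
    (hμpos : ∀ s, 0 < μ s) (hμsum : ∑ s : S, μ s = 1)
    (hstat : ∀ s' : S, ∑ s : S, μ s * P s s' = μ s')
    (normD : (S → ℝ) → ℝ) (innerD : (S → ℝ) → (S → ℝ) → ℝ)
    (hnormD : ∀ v, normD v = Real.sqrt (∑ s : S, μ s * v s ^ 2))
    (hinnerD : ∀ u v, innerD u v = ∑ s : S, μ s * u s * v s)
    (r : S → ℝ) (T : (S → ℝ) → (S → ℝ))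
    (hT : ∀ V, T V = r + γ • P.mulVec V)
    (Vpi : S → ℝ) (hVpi : T Vpi = Vpi)
    (Φ : Matrix S (Fin d) ℝ)
    (Proj : (S → ℝ) →ₗ[ℝ] (S → ℝ))
    (hProjRange : ∀ v, Proj v ∈ Set.range Φ.mulVec)
    (hProjOrth : ∀ v, ∀ w ∈ Set.range Φ.mulVec, innerD (v - Proj v) w = 0)
    (θstar : Fin d → ℝ)
    (hθstar : Φ.mulVec θstar = Proj (T (Φ.mulVec θstar))) :
    normD (Φ.mulVec θstar - Vpi) ≤
      (1 / Real.sqrt (1 - γ ^ 2)) * normD (Proj Vpi - Vpi) := by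
  classical
  have hγ2 : 0 < 1 - γ ^ 2 := by nlinarith
  set Q : (S → ℝ) → ℝ := fun v => ∑ s : S, μ s * v s ^ 2 with hQ
  have hQnonneg : ∀ v, 0 ≤ Q v := fun v =>
    Finset.sum_nonneg fun s _ => mul_nonneg (hμpos s).le (sq_nonneg _)
  have hQadd : ∀ u v, Q (u + v) = Q u + 2 * innerD u v + Q v := by
    intro u v
    simp only [hQ, hinnerD, Pi.add_apply]
    rw [Finset.mul_sum, ← Finset.sum_add_distrib, ← Finset.sum_add_distrib]
    exact Finset.sum_congr rfl fun s _ => by ring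
  have hsymm : ∀ u v, innerD u v = innerD v u := by
    intro u v; rw [hinnerD, hinnerD]
    exact Finset.sum_congr rfl fun s _ => by ring
  have hQsmul : ∀ (c : ℝ) w, Q (c • w) = c ^ 2 * Q w := by
    intro c w
    simp only [hQ, Pi.smul_apply, smul_eq_mul, Finset.mul_sum]
    exact Finset.sum_congr rfl fun s _ => by ring
  have hPyth : ∀ v, Q v = Q (Proj v) + Q (v - Proj v) := by
    intro v
    have h0 : innerD (Proj v) (v - Proj v) = 0 := by
      rw [hsymm]; exact hProjOrth v _ (hProjRange v)
    have hv : Proj v + (v - Proj v) = v := by abel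
    calc Q v = Q (Proj v + (v - Proj v)) := by rw [hv]
      _ = Q (Proj v) + 2 * innerD (Proj v) (v - Proj v) + Q (v - Proj v) := hQadd _ _
      _ = Q (Proj v) + Q (v - Proj v) := by rw [h0]; ring
  have hProjLe : ∀ v, Q (Proj v) ≤ Q v := by
    intro v; rw [hPyth v]; linarith [hQnonneg (v - Proj v)]
  -- contraction of P in the Q-seminorm
  have hPcontr : ∀ v, Q (P.mulVec v) ≤ Q v := by
    intro v
    have hstep : ∀ s : S, (P.mulVec v s) ^ 2 ≤ ∑ s' : S, P s s' * v s' ^ 2 := by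
      intro s
      have hcs := Finset.sum_mul_sq_le_sq_mul_sq Finset.univ
        (fun s' => Real.sqrt (P s s')) (fun s' => Real.sqrt (P s s') * v s')
      have h1 : ∀ s' : S, Real.sqrt (P s s') * (Real.sqrt (P s s') * v s')
          = P s s' * v s' := by
        intro s'; rw [← mul_assoc, Real.mul_self_sqrt (hPnonneg s s')]
      have h2 : ∀ s' : S, Real.sqrt (P s s') ^ 2 = P s s' := fun s' =>
        Real.sq_sqrt (hPnonneg s s')
      have h3 : ∀ s' : S, (Real.sqrt (P s s') * v s') ^ 2 = P s s' * v s' ^ 2 := by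
        intro s'; rw [mul_pow, h2]
      simp only [h1, h3] at hcs
      have hmv : P.mulVec v s = ∑ s' : S, P s s' * v s' := rfl
      calc (P.mulVec v s) ^ 2 = (∑ s' : S, P s s' * v s') ^ 2 := by rw [hmv]
        _ ≤ (∑ s' : S, Real.sqrt (P s s') ^ 2) * ∑ s' : S, P s s' * v s' ^ 2 := hcs
        _ = ∑ s' : S, P s s' * v s' ^ 2 := by
            simp only [h2]; rw [hProw s, one_mul]
    calc Q (P.mulVec v) ≤ ∑ s : S, μ s * ∑ s' : S, P s s' * v s' ^ 2 := by
          refine Finset.sum_le_sum fun s _ => ?_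
          exact mul_le_mul_of_nonneg_left (hstep s) (hμpos s).le
      _ = ∑ s : S, ∑ s' : S, μ s * P s s' * v s' ^ 2 := by
          refine Finset.sum_congr rfl fun s _ => ?_
          rw [Finset.mul_sum]
          exact Finset.sum_congr rfl fun s' _ => by ring
      _ = ∑ s' : S, ∑ s : S, μ s * P s s' * v s' ^ 2 := Finset.sum_comm
      _ = ∑ s' : S, μ s' * v s' ^ 2 := by
          refine Finset.sum_congr rfl fun s' _ => ?_
          rw [← Finset.sum_mul, hstat s']
      _ = Q v := rfl
  set e : S → ℝ := Φ.mulVec θstar - Vpi with he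
  have hTdiff : T (Φ.mulVec θstar) - T Vpi = γ • P.mulVec e := by
    rw [hT, hT, he, Matrix.mulVec_sub, smul_sub]
    abel
  have hkey : Φ.mulVec θstar - Proj Vpi = γ • Proj (P.mulVec e) := by
    calc Φ.mulVec θstar - Proj Vpi
        = Proj (T (Φ.mulVec θstar)) - Proj (T Vpi) := by rw [hVpi, ← hθstar]
      _ = Proj (T (Φ.mulVec θstar) - T Vpi) := (map_sub Proj _ _).symm
      _ = Proj (γ • P.mulVec e) := by rw [hTdiff]
      _ = γ • Proj (P.mulVec e) := map_smul Proj _ _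
  -- the residual is orthogonal to the range
  have hyorth : ∀ w ∈ Set.range Φ.mulVec, innerD (Proj Vpi - Vpi) w = 0 := by
    intro w hw
    have h1 := hProjOrth Vpi w hw
    rw [hinnerD] at h1 ⊢
    have h2 : (∑ s : S, μ s * (Proj Vpi - Vpi) s * w s)
        = - ∑ s : S, μ s * (Vpi - Proj Vpi) s * w s := by
      rw [← Finset.sum_neg_distrib]
      refine Finset.sum_congr rfl fun s _ => ?_
      simp only [Pi.sub_apply]; ring
    rw [h2, h1, neg_zero]
  have hxrange : Φ.mulVec θstar - Proj Vpi ∈ Set.range Φ.mulVec := by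
    obtain ⟨x2, hx2⟩ := hProjRange Vpi
    exact ⟨θstar - x2, by rw [Matrix.mulVec_sub, hx2]⟩
  -- Pythagoras decomposition of the error
  have hdecomp : e = (Φ.mulVec θstar - Proj Vpi) + (Proj Vpi - Vpi) := by
    rw [he]; abel
  have hQe : Q e = Q (Φ.mulVec θstar - Proj Vpi) + Q (Proj Vpi - Vpi) := by
    rw [hdecomp, hQadd, hsymm, hyorth _ hxrange]
    ring
  have hQx : Q (Φ.mulVec θstar - Proj Vpi) ≤ γ ^ 2 * Q e := by
    rw [hkey, hQsmul]
    have := le_trans (hProjLe (P.mulVec e)) (hPcontr e)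
    nlinarith [sq_nonneg γ]
  have hmain : Q e ≤ Q (Proj Vpi - Vpi) / (1 - γ ^ 2) := by
    rw [le_div_iff₀ hγ2]
    nlinarith [hQe, hQx]
  rw [hnormD, hnormD]
  have hgoal : Real.sqrt (Q e) ≤ Real.sqrt (Q (Proj Vpi - Vpi) / (1 - γ ^ 2)) :=
    Real.sqrt_le_sqrt hmain
  calc Real.sqrt (∑ s : S, μ s * (Φ.mulVec θstar - Vpi) s ^ 2)
      = Real.sqrt (Q e) := by rw [he]
    _ ≤ Real.sqrt (Q (Proj Vpi - Vpi) / (1 - γ ^ 2)) := hgoal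
    _ = Real.sqrt (Q (Proj Vpi - Vpi)) / Real.sqrt (1 - γ ^ 2) :=
        Real.sqrt_div (hQnonneg _) _
    _ = (1 / Real.sqrt (1 - γ ^ 2)) *
        Real.sqrt (∑ s : S, μ s * (Proj Vpi - Vpi) s ^ 2) := by
        rw [one_div, div_eq_mul_inv, mul_comm]
end

section
/- Let P^π be the transition matrix of an ergodic Markov chain with stationary distribution μ (with D = diag(μ)), and γ ∈ (0,1). Then for any vector v, ‖P^π v‖_D ≤ ‖v‖_D, and consequently the Bellman operator T^π V = r^π + γ P^π V is a γ-contraction with respect to ‖·‖_D, and hence the projected operator Π T^π is also a γ-contraction with respect to ‖·‖_D, so the projected Bellman equation V_θ = Π T^π V_θ has a unique fixed point in the span of Φ. -/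
open Finset

/-- For the transition matrix `P^π` of an ergodic chain with stationary
distribution `μ` (`D = diag(μ)`), and `γ ∈ (0,1)`: `‖P^π v‖_D ≤ ‖v‖_D` for all `v`; hence the
Bellman operator `T^π V = r^π + γ P^π V` is a `γ`-contraction in `‖·‖_D`; hence the projected
operator `Proj T^π` is a `γ`-contraction in `‖·‖_D` (for the nonexpansive `D`-orthogonal
projection `Proj` onto `span(Φ)`); and the projected Bellman equation `V = Proj T^π V` has a unique
fixed point in the span of `Φ`. -/
theorem stmt_15 {S : Type*} [Fintype S] [Nonempty S] {d : ℕ}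
    (P : Matrix S S ℝ) (μ : S → ℝ) (γ : ℝ) (hγ0 : 0 < γ) (hγ1 : γ < 1)
    (hPnonneg : ∀ s s', 0 ≤ P s s') (hProw : ∀ s, ∑ s' : S, P s s' = 1)
    (hμpos : ∀ s, 0 < μ s) (hμsum : ∑ s : S, μ s = 1)
    (hstat : ∀ s' : S, ∑ s : S, μ s * P s s' = μ s')
    (normD : (S → ℝ) → ℝ)
    (hnormD : ∀ v, normD v = Real.sqrt (∑ s : S, μ s * v s ^ 2))
    (r : S → ℝ) (T : (S → ℝ) → (S → ℝ))
    (hT : ∀ V, T V = r + γ • P.mulVec V)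
    (Φ : Matrix S (Fin d) ℝ)
    (Proj : (S → ℝ) →ₗ[ℝ] (S → ℝ))
    (hProjrange : ∀ v, Proj v ∈ Set.range Φ.mulVec)
    (hProjfix : ∀ v ∈ Set.range Φ.mulVec, Proj v = v)
    (hProjnonexp : ∀ v, normD (Proj v) ≤ normD v) :
    (∀ v, normD (P.mulVec v) ≤ normD v) ∧
    (∀ u v, normD (T u - T v) ≤ γ * normD (u - v)) ∧
    (∀ u v, normD (Proj (T u) - Proj (T v)) ≤ γ * normD (u - v)) ∧
    (∃! V : S → ℝ, V ∈ Set.range Φ.mulVec ∧ Proj (T V) = V) := by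
  -- zero lemma
  have hzero : ∀ v : S → ℝ, normD v = 0 → v = 0 := by
    intro v hv
    rw [hnormD] at hv
    have hnn : ∀ s ∈ Finset.univ, 0 ≤ μ s * v s ^ 2 := fun s _ =>
      mul_nonneg (hμpos s).le (sq_nonneg _)
    have hsum0 : ∑ s : S, μ s * v s ^ 2 = 0 := by
      have := Real.sqrt_eq_zero (Finset.sum_nonneg hnn) |>.mp hv
      exact this
    funext s
    have := (Finset.sum_eq_zero_iff_of_nonneg hnn).mp hsum0 s (Finset.mem_univ s)
    have hv2 : v s ^ 2 = 0 := by
      rcases mul_eq_zero.mp this with h | h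
      · exact absurd h (hμpos s).ne'
      · exact h
    exact pow_eq_zero_iff (by norm_num) |>.mp hv2
  -- scaling lemma
  have hsmul : ∀ (c : ℝ) (w : S → ℝ), normD (c • w) = |c| * normD w := by
    intro c w
    rw [hnormD, hnormD]
    have : (∑ s : S, μ s * (c • w) s ^ 2) = c ^ 2 * ∑ s : S, μ s * w s ^ 2 := by
      rw [Finset.mul_sum]
      refine Finset.sum_congr rfl fun s _ => ?_
      simp [Pi.smul_apply, smul_eq_mul]; ring
    rw [this, Real.sqrt_mul (sq_nonneg c), Real.sqrt_sq_eq_abs]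
  -- key inequality
  have hkey : ∀ v : S → ℝ, normD (P.mulVec v) ≤ normD v := by
    intro v
    rw [hnormD, hnormD]
    apply Real.sqrt_le_sqrt
    have step : ∀ s : S, (P.mulVec v s) ^ 2 ≤ ∑ s' : S, P s s' * v s' ^ 2 := by
      intro s
      have hcs := Finset.sum_mul_sq_le_sq_mul_sq Finset.univ
        (fun s' => Real.sqrt (P s s')) (fun s' => Real.sqrt (P s s') * v s')
      have h1 : ∀ s' : S, Real.sqrt (P s s') * (Real.sqrt (P s s') * v s')
          = P s s' * v s' := by
        intro s'
        rw [← mul_assoc, Real.mul_self_sqrt (hPnonneg s s')]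
      have h2 : ∀ s' : S, Real.sqrt (P s s') ^ 2 = P s s' := fun s' =>
        Real.sq_sqrt (hPnonneg s s')
      have h3 : ∀ s' : S, (Real.sqrt (P s s') * v s') ^ 2 = P s s' * v s' ^ 2 := by
        intro s'; rw [mul_pow, h2]
      simp only [h1, h3] at hcs
      calc (P.mulVec v s) ^ 2 = (∑ s' : S, P s s' * v s') ^ 2 := by
            rfl
        _ ≤ (∑ s' : S, Real.sqrt (P s s') ^ 2) * ∑ s' : S, P s s' * v s' ^ 2 := hcs
        _ = ∑ s' : S, P s s' * v s' ^ 2 := by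
            simp only [h2]; rw [hProw s, one_mul]
    calc ∑ s : S, μ s * (P.mulVec v s) ^ 2
        ≤ ∑ s : S, μ s * ∑ s' : S, P s s' * v s' ^ 2 :=
          Finset.sum_le_sum fun s _ => mul_le_mul_of_nonneg_left (step s) (hμpos s).le
      _ = ∑ s : S, ∑ s' : S, μ s * (P s s' * v s' ^ 2) := by
          refine Finset.sum_congr rfl fun s _ => ?_
          rw [Finset.mul_sum]
      _ = ∑ s' : S, ∑ s : S, μ s * (P s s' * v s' ^ 2) := Finset.sum_comm
      _ = ∑ s' : S, (∑ s : S, μ s * P s s') * v s' ^ 2 := by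
          refine Finset.sum_congr rfl fun s' _ => ?_
          rw [Finset.sum_mul]
          refine Finset.sum_congr rfl fun s _ => ?_
          ring
      _ = ∑ s' : S, μ s' * v s' ^ 2 := by
          refine Finset.sum_congr rfl fun s' _ => ?_
          rw [hstat s']
  -- contraction of T
  have hTc : ∀ u v, normD (T u - T v) ≤ γ * normD (u - v) := by
    intro u v
    have hdiff : T u - T v = γ • P.mulVec (u - v) := by
      rw [hT, hT, Matrix.mulVec_sub]
      ext s
      simp [Pi.smul_apply, smul_eq_mul]
      ring
    rw [hdiff, hsmul, abs_of_pos hγ0]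
    exact mul_le_mul_of_nonneg_left (hkey _) hγ0.le
  -- contraction of Proj ∘ T
  have hPTc : ∀ u v, normD (Proj (T u) - Proj (T v)) ≤ γ * normD (u - v) := by
    intro u v
    rw [← map_sub]
    exact le_trans (hProjnonexp _) (hTc u v)
  refine ⟨hkey, hTc, hPTc, ?_⟩
  -- unique fixed point
  set L : (S → ℝ) →ₗ[ℝ] (S → ℝ) := γ • (Proj ∘ₗ P.mulVecLin) with hLdef
  have hL : ∀ v, L v = γ • Proj (P.mulVec v) := fun v => rfl
  have hLnorm : ∀ v, normD (L v) ≤ γ * normD v := by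
    intro v
    rw [hL, hsmul, abs_of_pos hγ0]
    exact mul_le_mul_of_nonneg_left (le_trans (hProjnonexp _) (hkey v)) hγ0.le
  have hfixzero : ∀ v : S → ℝ, v = L v → v = 0 := by
    intro v hv
    apply hzero
    have h1 : normD v ≤ γ * normD v := by
      conv_lhs => rw [hv]
      exact hLnorm v
    have h2 : 0 ≤ normD v := by rw [hnormD]; exact Real.sqrt_nonneg _
    nlinarith
  have hinj : Function.Injective ((LinearMap.id : (S → ℝ) →ₗ[ℝ] (S → ℝ)) - L) := by
    intro a b hab
    simp only [LinearMap.sub_apply, LinearMap.id_apply] at hab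
    have h2 : a - b = L (a - b) := by
      rw [map_sub]
      linear_combination hab
    have h3 : a - b = 0 := hfixzero _ h2
    exact sub_eq_zero.mp h3
  have hsurj : Function.Surjective ((LinearMap.id : (S → ℝ) →ₗ[ℝ] (S → ℝ)) - L) :=
    LinearMap.injective_iff_surjective.mp hinj
  obtain ⟨V, hV⟩ := hsurj (Proj r)
  simp only [LinearMap.sub_apply, LinearMap.id_apply] at hV
  -- hV : V - L V = Proj r
  have hProjT : ∀ W : S → ℝ, Proj (T W) = Proj r + L W := by
    intro W
    rw [hT, map_add, map_smul, hL]
  have hfix : Proj (T V) = V := by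
    rw [hProjT V, ← hV]
    abel
  refine ⟨V, ⟨?_, hfix⟩, ?_⟩
  · rw [← hfix]; exact hProjrange _
  · rintro V' ⟨-, hfix'⟩
    have hdiff : V' - V = L (V' - V) := by
      have e1 : V' = Proj r + L V' := by conv_lhs => rw [← hfix', hProjT]
      have e2 : V = Proj r + L V := by conv_lhs => rw [← hfix, hProjT]
      rw [map_sub]
      linear_combination e1 - e2
    have := hfixzero _ hdiff
    exact sub_eq_zero.mp this
end

section
/- Consider linear TD learning in a finite-state MRP: Ā = Φᵀ Ξ (I − γ P^π) Φ with Φ of full column rank, Ξ = diag(μ_π) for the stationary distribution μ_π of the ergodic chain P^π, and γ ∈ (0,1). Then the matrix −Ā is Hurwitz; equivalently, every eigenvalue of Ā has strictly positive real part. In particular Ā is invertible. -/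
open Finset Matrix

private lemma jensen_step {S : Type*} [Fintype S] (p v : S → ℝ)
    (hp : ∀ s, 0 ≤ p s) (hp1 : ∑ s, p s = 1) :
    (∑ s, p s * v s) ^ 2 ≤ ∑ s, p s * (v s) ^ 2 := by
  have h := Finset.sum_mul_sq_le_sq_mul_sq Finset.univ (fun s => Real.sqrt (p s))
    (fun s => Real.sqrt (p s) * v s)
  simp only [← mul_assoc, Real.mul_self_sqrt (hp _), mul_pow, Real.sq_sqrt (hp _)] at h
  calc (∑ s, p s * v s) ^ 2 ≤ (∑ s, p s) * ∑ s, p s * v s ^ 2 := h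
    _ = ∑ s, p s * (v s) ^ 2 := by rw [hp1, one_mul]

private lemma quad_pos {S : Type*} [Fintype S] [DecidableEq S]
    (P : Matrix S S ℝ) (μ : S → ℝ) (γ : ℝ) (hγ0 : 0 < γ) (hγ1 : γ < 1)
    (hPnonneg : ∀ s s', 0 ≤ P s s') (hProw : ∀ s, ∑ s' : S, P s s' = 1)
    (hμpos : ∀ s, 0 < μ s)
    (hstat : ∀ s' : S, ∑ s : S, μ s * P s s' = μ s')
    (v : S → ℝ) (hv : v ≠ 0) :
    0 < v ⬝ᵥ ((Matrix.diagonal μ * (1 - γ • P)) *ᵥ v) := by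
  set w := P *ᵥ v with hw
  set A := ∑ s, μ s * (v s) ^ 2 with hA
  set B := ∑ s, μ s * (w s) ^ 2 with hB
  set C := ∑ s, μ s * (v s * w s) with hC
  have hgoal : v ⬝ᵥ ((Matrix.diagonal μ * (1 - γ • P)) *ᵥ v) = A - γ * C := by
    rw [← Matrix.mulVec_mulVec]
    have h1 : (1 - γ • P) *ᵥ v = v - γ • w := by
      rw [Matrix.sub_mulVec, Matrix.one_mulVec, Matrix.smul_mulVec]
    rw [h1]
    simp only [dotProduct, Matrix.mulVec_diagonal, Pi.sub_apply, Pi.smul_apply,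
      smul_eq_mul, hA, hC, Finset.mul_sum, ← Finset.sum_sub_distrib]
    apply Finset.sum_congr rfl
    intro s _
    ring
  -- A > 0
  have hApos : 0 < A := by
    obtain ⟨s0, hs0⟩ : ∃ s, v s ≠ 0 := by
      by_contra h
      push_neg at h
      exact hv (funext h)
    apply Finset.sum_pos'
    · intro s _
      have h1 := (hμpos s).le
      positivity
    · exact ⟨s0, Finset.mem_univ _, mul_pos (hμpos s0) (by positivity)⟩
  -- B ≤ A
  have hBA : B ≤ A := by
    have hstep : ∀ s, μ s * (w s) ^ 2 ≤ μ s * ∑ s', P s s' * (v s') ^ 2 := by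
      intro s
      apply mul_le_mul_of_nonneg_left _ (hμpos s).le
      have := jensen_step (fun s' => P s s') v (hPnonneg s) (hProw s)
      simpa [hw, Matrix.mulVec, dotProduct] using this
    calc B ≤ ∑ s, μ s * ∑ s', P s s' * (v s') ^ 2 :=
          Finset.sum_le_sum fun s _ => hstep s
      _ = ∑ s', (∑ s, μ s * P s s') * (v s') ^ 2 := by
          simp_rw [Finset.mul_sum, Finset.sum_mul]
          rw [Finset.sum_comm]
          exact Finset.sum_congr rfl fun s' _ => Finset.sum_congr rfl fun s _ => by ring
      _ = A := by
          apply Finset.sum_congr rfl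
          intro s' _
          rw [hstat s']
  -- C² ≤ A * B
  have hCsq : C ^ 2 ≤ A * B := by
    have h := Finset.sum_mul_sq_le_sq_mul_sq Finset.univ
      (fun s => Real.sqrt (μ s) * v s) (fun s => Real.sqrt (μ s) * w s)
    have e : ∀ s : S, Real.sqrt (μ s) * v s * (Real.sqrt (μ s) * w s) = μ s * (v s * w s) := by
      intro s
      have h2 : Real.sqrt (μ s) * Real.sqrt (μ s) = μ s := Real.mul_self_sqrt (hμpos s).le
      linear_combination (v s * w s) * h2
    simp only [e, mul_pow, Real.sq_sqrt (hμpos _).le] at h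
    exact h
  have hCA : C ≤ A := by
    nlinarith [hApos, hBA, hCsq, sq_nonneg (C - A)]
  rw [hgoal]
  nlinarith [hApos, hCA]

/-- In linear TD learning on a finite-state MRP, with
`Ā = Φᵀ Ξ (I − γ P^π) Φ`, `Φ` of full column rank, `Ξ = diag(μ_π)` for the stationary
distribution `μ_π` of the ergodic chain `P^π`, and `γ ∈ (0,1)`: the matrix `−Ā` is Hurwitz,
i.e., every (complex) eigenvalue of `Ā` has strictly positive real part; in particular `Ā`
is invertible. -/
theorem stmt_16 {S : Type*} [Fintype S] [DecidableEq S] [Nonempty S] {d : ℕ}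
    (P : Matrix S S ℝ) (μ : S → ℝ) (γ : ℝ) (hγ0 : 0 < γ) (hγ1 : γ < 1)
    (hPnonneg : ∀ s s', 0 ≤ P s s') (hProw : ∀ s, ∑ s' : S, P s s' = 1)
    (hμpos : ∀ s, 0 < μ s) (hμsum : ∑ s : S, μ s = 1)
    (hstat : ∀ s' : S, ∑ s : S, μ s * P s s' = μ s')
    (Φ : Matrix S (Fin d) ℝ) (hΦ : Function.Injective Φ.mulVec)
    (Ξ : Matrix S S ℝ) (hΞ : Ξ = Matrix.diagonal μ)
    (Abar : Matrix (Fin d) (Fin d) ℝ)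
    (hAbar : Abar = Φᵀ * Ξ * (1 - γ • P) * Φ) :
    (∀ z ∈ spectrum ℂ (Abar.map (Complex.ofReal ·)), 0 < z.re) ∧ IsUnit Abar.det := by
  -- quadratic form positivity for Abar
  have hquad : ∀ θ : Fin d → ℝ, θ ≠ 0 → 0 < θ ⬝ᵥ (Abar *ᵥ θ) := by
    intro θ hθ
    have hv : Φ *ᵥ θ ≠ 0 := by
      intro h
      apply hθ
      apply hΦ
      rw [h, Matrix.mulVec_zero]
    have key := quad_pos P μ γ hγ0 hγ1 hPnonneg hProw hμpos hstat (Φ *ᵥ θ) hv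
    have : θ ⬝ᵥ (Abar *ᵥ θ) = (Φ *ᵥ θ) ⬝ᵥ ((Matrix.diagonal μ * (1 - γ • P)) *ᵥ (Φ *ᵥ θ)) := by
      rw [hAbar, hΞ]
      rw [show Φᵀ * Matrix.diagonal μ * (1 - γ • P) * Φ
          = Φᵀ * (Matrix.diagonal μ * (1 - γ • P) * Φ) by simp only [Matrix.mul_assoc]]
      rw [← Matrix.mulVec_mulVec, Matrix.dotProduct_mulVec, Matrix.vecMul_transpose,
        ← Matrix.mulVec_mulVec]
    rw [this]
    exact key
  have hquadnn : ∀ θ : Fin d → ℝ, 0 ≤ θ ⬝ᵥ (Abar *ᵥ θ) := by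
    intro θ
    by_cases h : θ = 0
    · simp [h]
    · exact (hquad θ h).le
  constructor
  · intro z hz
    rw [spectrum.mem_iff] at hz
    set Mc := Abar.map (Complex.ofReal ·) with hMc
    rw [Matrix.isUnit_iff_isUnit_det, isUnit_iff_ne_zero, not_not] at hz
    obtain ⟨x, hx0, hx⟩ := Matrix.exists_mulVec_eq_zero_iff.mpr hz
    have heig : Mc *ᵥ x = z • x := by
      have h1 : (algebraMap ℂ (Matrix (Fin d) (Fin d) ℂ)) z = z • 1 := by
        rw [Algebra.algebraMap_eq_smul_one]
      rw [h1, Matrix.sub_mulVec, Matrix.smul_mulVec, Matrix.one_mulVec] at hx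
      rw [sub_eq_zero] at hx
      exact hx.symm
    set a : Fin d → ℝ := fun i => (x i).re with ha
    set b : Fin d → ℝ := fun i => (x i).im with hb
    have hAa : ∀ i, (Abar *ᵥ a) i = z.re * a i - z.im * b i := by
      intro i
      have h := congrFun heig i
      have hre : ((Mc *ᵥ x) i).re = (Abar *ᵥ a) i := by
        simp [hMc, Matrix.mulVec, dotProduct, Complex.re_sum, ha]
      have : ((z • x) i).re = z.re * a i - z.im * b i := by
        simp [ha, hb, Complex.mul_re]
      rw [← this, ← h, hre]
    have hAb : ∀ i, (Abar *ᵥ b) i = z.re * b i + z.im * a i := by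
      intro i
      have h := congrFun heig i
      have him : ((Mc *ᵥ x) i).im = (Abar *ᵥ b) i := by
        simp [hMc, Matrix.mulVec, dotProduct, Complex.im_sum, hb]
      have : ((z • x) i).im = z.re * b i + z.im * a i := by
        simp [ha, hb, Complex.mul_im]
      rw [← this, ← h, him]
    have hsum : a ⬝ᵥ (Abar *ᵥ a) + b ⬝ᵥ (Abar *ᵥ b) = z.re * (a ⬝ᵥ a + b ⬝ᵥ b) := by
      simp only [dotProduct, ← Finset.sum_add_distrib, Finset.mul_sum]
      apply Finset.sum_congr rfl
      intro i _
      rw [hAa i, hAb i]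
      ring
    have hab : a ≠ 0 ∨ b ≠ 0 := by
      by_contra h
      push_neg at h
      apply hx0
      funext i
      have h1 := congrFun h.1 i
      have h2 := congrFun h.2 i
      simp only [ha, hb, Pi.zero_apply] at h1 h2
      exact Complex.ext h1 h2
    have hpos : 0 < a ⬝ᵥ (Abar *ᵥ a) + b ⬝ᵥ (Abar *ᵥ b) := by
      rcases hab with h | h
      · have := hquad a h
        have := hquadnn b
        linarith
      · have := hquad b h
        have := hquadnn a
        linarith
    have hnorm : 0 < a ⬝ᵥ a + b ⬝ᵥ b := by
      rcases hab with h | h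
      · obtain ⟨i, hi⟩ : ∃ i, a i ≠ 0 := by
          by_contra hc; push_neg at hc; exact h (funext hc)
        have h1 : 0 < a ⬝ᵥ a := by
          apply Finset.sum_pos'
          · intro j _; exact mul_self_nonneg _
          · exact ⟨i, Finset.mem_univ _, mul_self_pos.mpr hi⟩
        have h2 : 0 ≤ b ⬝ᵥ b := Finset.sum_nonneg fun j _ => mul_self_nonneg _
        linarith
      · obtain ⟨i, hi⟩ : ∃ i, b i ≠ 0 := by
          by_contra hc; push_neg at hc; exact h (funext hc)
        have h1 : 0 < b ⬝ᵥ b := by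
          apply Finset.sum_pos'
          · intro j _; exact mul_self_nonneg _
          · exact ⟨i, Finset.mem_univ _, mul_self_pos.mpr hi⟩
        have h2 : 0 ≤ a ⬝ᵥ a := Finset.sum_nonneg fun j _ => mul_self_nonneg _
        linarith
    rw [hsum] at hpos
    nlinarith [hpos, hnorm]
  · rw [isUnit_iff_ne_zero]
    intro hdet
    obtain ⟨θ, hθ0, hθ⟩ := Matrix.exists_mulVec_eq_zero_iff.mpr hdet
    have := hquad θ hθ0
    rw [hθ] at this
    simp at this
end
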